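/- (Factorial Schur Fehér–Némethi–Rimányi identity, the β = 0 case.) Let 0 ≤ k ≤ n and m ≥ k be integers, and let λ = (λ_1 ≥ ⋯ ≥ λ_k ≥ 0) be a partition with λ_1 ≤ m − k. Set μ = (m−k, …, m−k, λ_1, …, λ_k), the partition with n parts whose first n−k parts equal m−k followed by the parts of λ. Then s_μ(x_1,…,x_n|y) = Σ_{S ∈ binom([n],k)} s_λ(x_S|y) · (∏_{j∈S̄}(x_j|y)^m) / (∏_{i∈S}∏_{j∈S̄}(x_j − x_i)), where s_λ(x_S|y) is the factorial Schur polynomial in the k variables x_S. -/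

import Mathlib

/-- `(x|y)^j = (x + y_1)(x + y_2)⋯(x + y_j)`, with `(x|y)^0 = 1` (`y t` is `y_{t+1}`). -/
def facpow {F : Type*} [Field F] (y : ℕ → F) (x : F) (j : ℕ) : F :=
  ∏ t ∈ Finset.range j, (x + y t)

/-- The factorial Schur polynomial, given by the determinantal formula
`s_λ(x|y) = det((x_i|y)^{λ_j+n−j})_{1≤i,j≤n} / ∏_{i<j}(x_i − x_j)`. -/
noncomputable def facSchur {F : Type*} [Field F] (y : ℕ → F) {n : ℕ}
    (lam : Fin n → ℕ) (x : Fin n → F) : F :=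
  (Matrix.of fun i j : Fin n => facpow y (x i) (lam j + (n - 1 - (j : ℕ)))).det
    / ∏ i : Fin n, ∏ j ∈ Finset.Ioi i, (x i - x j)

/-!
Write `n = p + k`, so that `μ = (c^p, λ)` with `c + k = m`, and expand the alternant
`det((x_i|y)^{μ_j+n-j})` along its first `p` columns (generalized Laplace expansion). For the rows
`S̄`, the minor on those columns is `∏_{j∈S̄}(x_j|y)^m` times a factorial Vandermonde determinant,
which equals the plain Vandermonde product of `x_S̄`; the complementary minor is
`s_λ(x_S|y)` times the Vandermonde product of `x_S`. The sign of the shuffle listing `S̄` before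
`S` is exactly the sign relating `∏_{i<j}(x_i - x_j)` to the product of these two Vandermonde
products and `∏_{i∈S}∏_{j∈S̄}(x_j - x_i)`.
-/

open Finset Matrix Polynomial Equiv

section Vandermonde

variable {R : Type*} [CommRing R] {N p q : ℕ}

def vandermondeProd (v : Fin N → R) : R :=
  ∏ i, ∏ j ∈ Ioi i, (v i - v j)

lemma det_eq_sign_revPerm_mul_det_submatrix (A : Matrix (Fin N) (Fin N) R) :
    A.det = Perm.sign (Fin.revPerm : Perm (Fin N)) * (A.submatrix id Fin.revPerm).det := by
  rw [det_permute', ← mul_assoc, ← Int.cast_mul, ← Units.val_mul, Int.units_mul_self]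
  simp

lemma vandermondeProd_eq_det (v : Fin N → R) : vandermondeProd v = (projVandermonde 1 v).det := by
  simp [det_projVandermonde, vandermondeProd]

lemma det_eval_eq_vandermondeProd (v : Fin N → R) (P : Fin N → R[X])
    (h_deg : ∀ j, (P j).natDegree = N - 1 - j) (h_monic : ∀ j, (P j).Monic) :
    (of fun i j => (P j).eval (v i)).det = vandermondeProd v := by
  rw [vandermondeProd_eq_det, det_eq_sign_revPerm_mul_det_submatrix,
    det_eq_sign_revPerm_mul_det_submatrix (projVandermonde 1 v)]
  congr 1
  trans (vandermonde v).det
  · rw [det_eval_matrixOfPolynomials_eq_det_vandermonde v (P ∘ Fin.rev)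
      (fun j => by simp [h_deg]; omega) (fun j => h_monic _)]
    rfl
  · congr 1
    ext i j
    simp [projVandermonde_apply, vandermonde_apply]

lemma vandermondeProd_comp_perm (v : Fin N → R) (σ : Perm (Fin N)) :
    vandermondeProd (v ∘ σ) = Perm.sign σ * vandermondeProd v := by
  rw [vandermondeProd_eq_det, vandermondeProd_eq_det, ← det_permute]
  rfl

lemma vandermondeProd_ne_zero [IsDomain R] {v : Fin N → R} (hv : Function.Injective v) :
    vandermondeProd v ≠ 0 :=
  prod_ne_zero_iff.2 fun _ _ => prod_ne_zero_iff.2 fun _ hj =>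
    sub_ne_zero.2 <| hv.ne (mem_Ioi.1 hj).ne

lemma vandermondeProd_eq_prod_ite (v : Fin N → R) :
    vandermondeProd v = ∏ i, ∏ j, if i < j then v i - v j else 1 := by
  simp only [vandermondeProd, ← prod_filter, filter_lt_eq_Ioi]

lemma vandermondeProd_append (u : Fin p → R) (w : Fin q → R) :
    vandermondeProd (Fin.append u w) =
      vandermondeProd u * vandermondeProd w * ∏ a, ∏ b, (u a - w b) := by
  have hll (a a' : Fin p) : Fin.castAdd q a < Fin.castAdd q a' ↔ a < a' := Iff.rfl
  have hlr (a : Fin p) (b : Fin q) : Fin.castAdd q a < Fin.natAdd p b := by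
    simp [Fin.lt_def]; omega
  have hrl (a : Fin p) (b : Fin q) : ¬Fin.natAdd p b < Fin.castAdd q a := by
    simp [Fin.lt_def]; omega
  simp only [vandermondeProd_eq_prod_ite, Fin.prod_univ_add, Fin.append_left, Fin.append_right,
    hll, hlr, hrl, Fin.natAdd_lt_natAdd_iff, if_true, if_false, prod_const_one, mul_one,
    prod_mul_distrib]
  ring

lemma prod_orderEmbOfFin {α M : Type*} [LinearOrder α] [CommMonoid M] (s : Finset α) {k : ℕ}
    (h : #s = k) (f : α → M) : ∏ i, f (s.orderEmbOfFin h i) = ∏ a ∈ s, f a := by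
  conv_rhs => rw [← map_orderEmbOfFin_univ s h, prod_map]
  rfl

end Vandermonde

section Laplace

variable {R : Type*} [CommRing R] {p q : ℕ}

lemma card_compl_eq_of_card_eq {S : Finset (Fin (p + q))} (hS : #S = q) : #Sᶜ = p := by
  simp [card_compl, hS]

noncomputable def shufflePerm (S : Finset (Fin (p + q))) (hS : #S = q) : Perm (Fin (p + q)) :=
  .ofBijective (Fin.append (Sᶜ.orderEmbOfFin (card_compl_eq_of_card_eq hS)) (S.orderEmbOfFin hS))
    (Finite.injective_iff_bijective.1 <| Fin.append_injective_iff.2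
      ⟨(orderEmbOfFin _ _).injective, (orderEmbOfFin _ _).injective, fun a b h =>
        mem_compl.1 (orderEmbOfFin_mem _ _ a) (h ▸ orderEmbOfFin_mem _ _ b)⟩)

@[simp] lemma shufflePerm_castAdd {S : Finset (Fin (p + q))} (hS : #S = q) (a : Fin p) :
    shufflePerm S hS (Fin.castAdd q a) = Sᶜ.orderEmbOfFin (card_compl_eq_of_card_eq hS) a := by
  simp [shufflePerm]

@[simp] lemma shufflePerm_natAdd {S : Finset (Fin (p + q))} (hS : #S = q) (b : Fin q) :
    shufflePerm S hS (Fin.natAdd p b) = S.orderEmbOfFin hS b := by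
  simp [shufflePerm]

def blockPerm (τ₁ : Perm (Fin p)) (τ₂ : Perm (Fin q)) : Perm (Fin (p + q)) :=
  finSumFinEquiv.permCongr (τ₁.sumCongr τ₂)

@[simp] lemma blockPerm_castAdd (τ₁ : Perm (Fin p)) (τ₂ : Perm (Fin q)) (a : Fin p) :
    blockPerm τ₁ τ₂ (Fin.castAdd q a) = Fin.castAdd q (τ₁ a) := by
  simp [blockPerm, permCongr_apply]

@[simp] lemma blockPerm_natAdd (τ₁ : Perm (Fin p)) (τ₂ : Perm (Fin q)) (b : Fin q) :
    blockPerm τ₁ τ₂ (Fin.natAdd p b) = Fin.natAdd p (τ₂ b) := by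
  simp [blockPerm, permCongr_apply]

lemma sign_blockPerm (τ₁ : Perm (Fin p)) (τ₂ : Perm (Fin q)) :
    Perm.sign (blockPerm τ₁ τ₂) = Perm.sign τ₁ * Perm.sign τ₂ := by
  rw [blockPerm, Perm.sign_permCongr, Perm.sign_sumCongr]

lemma blockPerm_injective :
    Function.Injective fun τ : Perm (Fin p) × Perm (Fin q) => blockPerm τ.1 τ.2 := by
  rintro ⟨τ₁, τ₂⟩ ⟨τ₁', τ₂'⟩ h
  simp only [Prod.mk.injEq]
  constructor <;> ext i
  · simpa using congrArg Fin.val (DFunLike.congr_fun h (Fin.castAdd q i))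
  · simpa using congrArg Fin.val (DFunLike.congr_fun h (Fin.natAdd p i))

lemma image_shufflePerm_mul_blockPerm_natAdd {S : Finset (Fin (p + q))} (hS : #S = q)
    (τ₁ : Perm (Fin p)) (τ₂ : Perm (Fin q)) :
    univ.image (fun b => (shufflePerm S hS * blockPerm τ₁ τ₂) (Fin.natAdd p b)) = S := by
  simp only [Perm.mul_apply, blockPerm_natAdd, shufflePerm_natAdd]
  conv_rhs => rw [← image_orderEmbOfFin_univ S hS, ← image_univ_equiv τ₂, image_image]
  rfl

lemma shufflePerm_mul_blockPerm_bijective :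
    Function.Bijective fun t : (Σ _ : {S : Finset (Fin (p + q)) // #S = q},
        Perm (Fin p) × Perm (Fin q)) => shufflePerm t.1.1 t.1.2 * blockPerm t.2.1 t.2.2 := by
  rw [Fintype.bijective_iff_injective_and_card]
  constructor
  · rintro ⟨⟨S, hS⟩, τ₁, τ₂⟩ ⟨⟨S', hS'⟩, τ₁', τ₂'⟩ h
    obtain rfl : S = S' := by
      rw [← image_shufflePerm_mul_blockPerm_natAdd hS τ₁ τ₂,
        ← image_shufflePerm_mul_blockPerm_natAdd hS' τ₁' τ₂']
      simp only at h
      rw [h]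
    obtain ⟨rfl, rfl⟩ := Prod.ext_iff.1 (blockPerm_injective (mul_left_cancel h))
    rfl
  · simp [Fintype.card_perm, ← Nat.add_choose_mul_factorial_mul_factorial, mul_assoc]

theorem det_eq_sum_shufflePerm (M : Matrix (Fin (p + q)) (Fin (p + q)) R) :
    M.det = ∑ S : {S : Finset (Fin (p + q)) // #S = q},
      Perm.sign (shufflePerm S.1 S.2) *
        (M.submatrix (S.1ᶜ.orderEmbOfFin (card_compl_eq_of_card_eq S.2)) (Fin.castAdd q)).det *
        (M.submatrix (S.1.orderEmbOfFin S.2) (Fin.natAdd p)).det := by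
  rw [det_apply', ← shufflePerm_mul_blockPerm_bijective.sum_comp, ← univ_sigma_univ, sum_sigma]
  refine sum_congr rfl fun S _ => ?_
  rw [det_apply', det_apply', mul_assoc, sum_mul_sum]
  simp_rw [mul_sum]
  rw [← Fintype.sum_prod_type']
  refine sum_congr rfl fun τ _ => ?_
  simp only [Perm.sign_mul, sign_blockPerm, Fin.prod_univ_add, Perm.mul_apply, blockPerm_castAdd,
    blockPerm_natAdd, shufflePerm_castAdd, shufflePerm_natAdd, submatrix_apply, Units.val_mul,
    Int.cast_mul]
  ring

lemma sign_shufflePerm_mul_vandermondeProd (x : Fin (p + q) → R) {S : Finset (Fin (p + q))}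
    (hS : #S = q) :
    Perm.sign (shufflePerm S hS) * vandermondeProd x =
      vandermondeProd (x ∘ Sᶜ.orderEmbOfFin (card_compl_eq_of_card_eq hS)) *
        vandermondeProd (x ∘ S.orderEmbOfFin hS) * ∏ i ∈ S, ∏ j ∈ Sᶜ, (x j - x i) := by
  have h_append : x ∘ shufflePerm S hS =
      Fin.append (x ∘ Sᶜ.orderEmbOfFin (card_compl_eq_of_card_eq hS)) (x ∘ S.orderEmbOfFin hS) := by
    funext i
    induction i using Fin.addCases <;> simp
  rw [← vandermondeProd_comp_perm, h_append, vandermondeProd_append, prod_comm,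
    ← prod_orderEmbOfFin S hS]
  exact congrArg _ <| prod_congr rfl fun b _ => prod_orderEmbOfFin _ _ (fun j => x j - x _)

end Laplace

section FactorialSchur

variable {F : Type*} [Field F] (y : ℕ → F) {N p q : ℕ}

def facAlternant (lam : Fin N → ℕ) (x : Fin N → F) : Matrix (Fin N) (Fin N) F :=
  of fun i j => facpow y (x i) (lam j + (N - 1 - j))

lemma facSchur_eq_det_div (lam : Fin N → ℕ) (x : Fin N → F) :
    facSchur y lam x = (facAlternant y lam x).det / vandermondeProd x :=
  rfl

lemma det_facAlternant {x : Fin N → F} (hx : Function.Injective x) (lam : Fin N → ℕ) :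
    (facAlternant y lam x).det = facSchur y lam x * vandermondeProd x := by
  rw [facSchur_eq_det_div, div_mul_cancel₀ _ (vandermondeProd_ne_zero hx)]

lemma facpow_eq_eval (x : F) (j : ℕ) :
    facpow y x j = (∏ t ∈ range j, (X + C (y t))).eval x := by
  simp [facpow, eval_prod]

lemma facpow_add (x : F) (m r : ℕ) :
    facpow y x (m + r) = facpow y x m * facpow (fun t => y (m + t)) x r :=
  prod_range_add _ m r

lemma det_facpow_eq_vandermondeProd (v : Fin N → F) :
    (of fun i j : Fin N => facpow y (v i) (N - 1 - j)).det = vandermondeProd v := by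
  simp_rw [facpow_eq_eval]
  exact det_eval_eq_vandermondeProd v _
    (fun j => by simp [natDegree_prod_of_monic _ _ fun t _ => monic_X_add_C _])
    (fun j => monic_prod_of_monic _ _ fun t _ => monic_X_add_C _)

lemma det_facAlternant_const (m : ℕ) (v : Fin N → F) :
    (facAlternant y (fun _ => m) v).det = (∏ i, facpow y (v i) m) * vandermondeProd v := by
  simp only [facAlternant, facpow_add]
  rw [← det_facpow_eq_vandermondeProd (fun t => y (m + t)) v]
  exact det_mul_column (fun i => facpow y (v i) m) _

lemma facAlternant_append_submatrix_castAdd (μ : Fin p → ℕ) (lam : Fin q → ℕ)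
    (x : Fin (p + q) → F) (r : Fin p → Fin (p + q)) :
    (facAlternant y (Fin.append μ lam) x).submatrix r (Fin.castAdd q) =
      facAlternant y (fun j => μ j + q) (x ∘ r) := by
  ext a j
  simp only [facAlternant, submatrix_apply, of_apply, Fin.append_left, Fin.val_castAdd,
    Function.comp_apply]
  congr 1
  omega

lemma facAlternant_append_submatrix_natAdd (μ : Fin p → ℕ) (lam : Fin q → ℕ)
    (x : Fin (p + q) → F) (r : Fin q → Fin (p + q)) :
    (facAlternant y (Fin.append μ lam) x).submatrix r (Fin.natAdd p) =
      facAlternant y lam (x ∘ r) := by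
  ext b t
  simp only [facAlternant, submatrix_apply, of_apply, Fin.append_right, Fin.val_natAdd,
    Function.comp_apply]
  congr 2
  omega

theorem facSchur_append_const {x : Fin (p + q) → F} (hx : Function.Injective x) (c : ℕ)
    (lam : Fin q → ℕ) :
    facSchur y (Fin.append (fun _ : Fin p => c) lam) x =
      ∑ S : {S : Finset (Fin (p + q)) // #S = q},
        facSchur y lam (x ∘ S.1.orderEmbOfFin S.2) *
          ((∏ j ∈ S.1ᶜ, facpow y (x j) (c + q)) / ∏ i ∈ S.1, ∏ j ∈ S.1ᶜ, (x j - x i)) := by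
  rw [facSchur_eq_det_div, det_eq_sum_shufflePerm, sum_div]
  refine sum_congr rfl ?_
  rintro ⟨S, hS⟩ -
  have hV := sign_shufflePerm_mul_vandermondeProd x hS
  have hVx := vandermondeProd_ne_zero hx
  set ε : F := ((Perm.sign (shufflePerm S hS) : ℤ) : F)
  have hε : ε ^ 2 = 1 := by
    rw [← Int.cast_pow, ← Units.val_pow_eq_pow_val, Int.units_sq, Units.val_one, Int.cast_one]
  have hcross : ∏ i ∈ S, ∏ j ∈ Sᶜ, (x j - x i) ≠ 0 := by
    intro h
    rw [h, mul_zero, mul_eq_zero] at hV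
    exact hV.elim (fun h => by simp [h] at hε) hVx
  rw [facAlternant_append_submatrix_castAdd, facAlternant_append_submatrix_natAdd,
    det_facAlternant_const, det_facAlternant _ (hx.comp (orderEmbOfFin _ _).injective),
    ← prod_orderEmbOfFin Sᶜ (card_compl_eq_of_card_eq hS)]
  simp only [Function.comp_apply]
  set P := ∏ a, facpow y (x (Sᶜ.orderEmbOfFin (card_compl_eq_of_card_eq hS) a)) (c + q)
  set s := facSchur y lam (x ∘ S.orderEmbOfFin hS)
  field_simp
  linear_combination (-(ε * P * s)) * hV + (P * s * vandermondeProd x) * hε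

end FactorialSchur

/-- Fehér–Némethi–Rimányi identity for factorial Schur polynomials (the `β = 0` case):
with `μ = (m−k,…,m−k,λ_1,…,λ_k)` (`m−k` repeated `n−k` times),
`s_μ(x|y) = Σ_{S ∈ binom([n],k)} s_λ(x_S|y) ∏_{j∈S̄}(x_j|y)^m / ∏_{i∈S}∏_{j∈S̄}(x_j−x_i)`. -/
theorem stmt16 {F : Type*} [Field F] (y : ℕ → F) (n k m : ℕ)
    (hkn : k ≤ n) (hkm : k ≤ m)
    (x : Fin n → F) (hx : Function.Injective x)
    (lam : Fin k → ℕ) :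
    facSchur y (fun i : Fin n =>
        if h : (i : ℕ) < n - k then m - k
        else lam ⟨(i : ℕ) - (n - k), by have := i.isLt; omega⟩) x
      = ∑ S : {S : Finset (Fin n) // S.card = k},
          facSchur y lam (fun i : Fin k => x ((S.1.orderIsoOfFin S.2 i : Fin n)))
            * ((∏ j ∈ S.1ᶜ, facpow y (x j) m) / ∏ i ∈ S.1, ∏ j ∈ S.1ᶜ, (x j - x i)) := by
  obtain ⟨p, rfl⟩ := Nat.exists_eq_add_of_le' hkn
  have hμ : (fun i : Fin (p + k) =>
      if h : (i : ℕ) < p + k - k then m - k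
      else lam ⟨(i : ℕ) - (p + k - k), by have := i.isLt; omega⟩) =
        Fin.append (fun _ : Fin p => m - k) lam := by
    funext i
    induction i using Fin.addCases <;> simp
  rw [hμ, facSchur_append_const y hx, Nat.sub_add_cancel hkm]
  rfl
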